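/- Define f(a,b,r) = ₂F₁(a,b;a+b+1;r)/₂F₁(a,b;a+b;r) for a, b > 0. For each fixed a, b > 0, the function r ↦ f(a,b,r) is strictly decreasing on (0,1); in particular f(a,b,r) < 1 for all r ∈ (0,1). -/

import Mathlib

open Real Filter Set

noncomputable def poch (x : ℝ) (n : ℕ) : ℝ := (ascPochhammer ℝ n).eval x

noncomputable def hyp (a b c x : ℝ) : ℝ :=
  ∑' n : ℕ, poch a n * poch b n / (poch c n * n.factorial) * x ^ n

noncomputable def digamma (x : ℝ) : ℝ := deriv Real.Gamma x / Real.Gamma x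

open Topology

lemma poch_pos {x : ℝ} (hx : 0 < x) (n : ℕ) : 0 < poch x n := ascPochhammer_pos n x hx

lemma poch_succ_right (x : ℝ) (n : ℕ) : poch x (n+1) = poch x n * (x + n) :=
  ascPochhammer_succ_eval n x

lemma poch_succ_left (x : ℝ) (n : ℕ) : poch x (n+1) = x * poch (x+1) n := by
  unfold poch
  rw [ascPochhammer_succ_left]
  simp [Polynomial.eval_comp]

lemma tendsto_quot (p q : ℝ) : Tendsto (fun n : ℕ => (p + n) / (q + n)) atTop (𝓝 1) := by
  have h1 : Tendsto (fun n : ℕ => (q : ℝ) + n) atTop atTop :=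
    tendsto_atTop_add_const_left _ _ tendsto_natCast_atTop_atTop
  have h0 : Tendsto (fun n : ℕ => (p - q) / (q + n)) atTop (𝓝 0) :=
    Tendsto.div_atTop tendsto_const_nhds h1
  have : Tendsto (fun n : ℕ => 1 + (p - q) / (q + n)) atTop (𝓝 (1 + 0)) :=
    tendsto_const_nhds.add h0
  rw [add_zero] at this
  refine this.congr' ?_
  filter_upwards [h1.eventually_gt_atTop 0] with n hn
  field_simp
  ring

noncomputable def cf (a b c : ℝ) (n : ℕ) : ℝ := poch a n * poch b n / (poch c n * n.factorial)

lemma cf_pos {a b c : ℝ} (ha : 0 < a) (hb : 0 < b) (hc : 0 < c) (n : ℕ) : 0 < cf a b c n := by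
  have h1 := poch_pos ha n
  have h2 := poch_pos hb n
  have h3 := poch_pos hc n
  have h4 : (0:ℝ) < n.factorial := by exact_mod_cast n.factorial_pos
  unfold cf; positivity

lemma cf_succ_rel {a b c : ℝ} (hc : 0 < c) (n : ℕ) :
    cf a b (c+1) n = cf a b c n * (c / (c + n)) := by
  have hcn : (0:ℝ) < c + n := by positivity
  have h1 : c * poch (c+1) n = poch c n * (c + n) := by
    rw [← poch_succ_left, poch_succ_right]
  have h2 : poch (c+1) n = poch c n * (c + n) / c := by
    field_simp [← h1]
    exact h1
  unfold cf
  rw [h2]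
  have h3 := (poch_pos hc n).ne'
  have h4 : ((n.factorial : ℝ)) ≠ 0 := by exact_mod_cast n.factorial_ne_zero
  field_simp

lemma summable_cf {a b c x : ℝ} (ha : 0 < a) (hb : 0 < b) (hc : 0 < c)
    (hx0 : 0 < x) (hx1 : x < 1) : Summable (fun n => cf a b c n * x ^ n) := by
  apply summable_of_ratio_test_tendsto_lt_one hx1
  · refine Eventually.of_forall fun n => ?_
    have := cf_pos ha hb hc n
    positivity
  · have key : ∀ n : ℕ, ‖cf a b c (n+1) * x ^ (n+1)‖ / ‖cf a b c n * x ^ n‖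
        = ((a + n)/(1 + n)) * ((b + n)/(c + n)) * x := by
      intro n
      have hp : 0 < cf a b c (n+1) * x ^ (n+1) := by
        have := cf_pos ha hb hc (n+1); positivity
      have hq : 0 < cf a b c n * x ^ n := by
        have := cf_pos ha hb hc n; positivity
      rw [Real.norm_eq_abs, Real.norm_eq_abs, abs_of_pos hp, abs_of_pos hq]
      unfold cf
      rw [poch_succ_right, poch_succ_right, poch_succ_right, Nat.factorial_succ]
      have h3 := (poch_pos hc n).ne'
      have h3a := (poch_pos ha n).ne'
      have h3b := (poch_pos hb n).ne'
      have h4 : ((n.factorial : ℝ)) ≠ 0 := by exact_mod_cast n.factorial_ne_zero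
      have h5 : (0:ℝ) < c + n := by positivity
      have h6 : (0:ℝ) < 1 + (n:ℝ) := by positivity
      push_cast
      field_simp
      ring
    rw [show (𝓝 x) = 𝓝 (1 * 1 * x) by rw [one_mul, one_mul]]
    exact Tendsto.congr (fun n => (key n).symm)
      (((tendsto_quot a 1).mul (tendsto_quot b c)).mul tendsto_const_nhds)

lemma abstract_ineq {x y P Q : ℝ} (h : (x - y) * (P - Q) ≤ 0) :
    x * P + y * Q ≤ x * Q + y * P := by nlinarith

lemma pow_mul_le {r s : ℝ} (hr : 0 < r) (hrs : r ≤ s) {m n : ℕ} (hmn : m ≤ n) :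
    s ^ m * r ^ n ≤ r ^ m * s ^ n := by
  have hs : 0 < s := lt_of_lt_of_le hr hrs
  obtain ⟨k, rfl⟩ := Nat.exists_eq_add_of_le hmn
  rw [pow_add, pow_add]
  have h1 : r ^ k ≤ s ^ k := pow_le_pow_left₀ hr.le hrs k
  have h0 : (0:ℝ) ≤ s ^ m * r ^ m := by positivity
  nlinarith [mul_le_mul_of_nonneg_left h1 h0]

lemma pointwise_ineq {c r s : ℝ} (hc : 0 < c) (hr : 0 < r) (hrs : r < s) (m n : ℕ) :
    (c/(c+m)) * (s^m * r^n) + (c/(c+n)) * (s^n * r^m)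
      ≤ (c/(c+m)) * (r^m * s^n) + (c/(c+n)) * (r^n * s^m) := by
  have h1 : (c/(c+n)) * (s^n * r^m) = (c/(c+n)) * (r^m * s^n) := by ring
  have h2 : (c/(c+n)) * (r^n * s^m) = (c/(c+n)) * (s^m * r^n) := by ring
  rw [h1, h2]
  apply abstract_ineq
  rcases le_total m n with hmn | hmn
  · apply mul_nonpos_of_nonneg_of_nonpos
    · apply sub_nonneg.2
      apply div_le_div_of_nonneg_left hc.le (by positivity)
      simp [hmn]
    · exact sub_nonpos.2 (pow_mul_le hr hrs.le hmn)
  · apply mul_nonpos_of_nonpos_of_nonneg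
    · apply sub_nonpos.2
      apply div_le_div_of_nonneg_left hc.le (by positivity)
      simp [hmn]
    · have h := pow_mul_le hr hrs.le hmn
      nlinarith [h]

set_option maxHeartbeats 2000000 in
lemma cross {a b r s : ℝ} (ha : 0 < a) (hb : 0 < b) (hr : 0 < r) (hrs : r < s) (hs : s < 1) :
    (∑' n, cf a b (a+b+1) n * s ^ n) * (∑' n, cf a b (a+b) n * r ^ n)
      < (∑' n, cf a b (a+b+1) n * r ^ n) * (∑' n, cf a b (a+b) n * s ^ n) := by
  set c := a + b with hcdef
  have hc : 0 < c := by positivity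
  have hc1 : 0 < c + 1 := by positivity
  have hs0 : 0 < s := hr.trans hrs
  have hr1 : r < 1 := hrs.trans hs
  have hAs : Summable (fun n => cf a b (c+1) n * s ^ n) := summable_cf ha hb hc1 hs0 hs
  have hAr : Summable (fun n => cf a b (c+1) n * r ^ n) := summable_cf ha hb hc1 hr hr1
  have hBs : Summable (fun n => cf a b c n * s ^ n) := summable_cf ha hb hc hs0 hs
  have hBr : Summable (fun n => cf a b c n * r ^ n) := summable_cf ha hb hc hr hr1
  have hApos : ∀ (x : ℝ) (n : ℕ), 0 < x → 0 < cf a b (c+1) n * x ^ n := by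
    intro x n hx; have := cf_pos ha hb hc1 n; positivity
  have hBpos : ∀ (x : ℝ) (n : ℕ), 0 < x → 0 < cf a b c n * x ^ n := by
    intro x n hx; have := cf_pos ha hb hc n; positivity
  set F : ℕ × ℕ → ℝ := fun p => (cf a b (c+1) p.1 * s ^ p.1) * (cf a b c p.2 * r ^ p.2) with hF
  set G : ℕ × ℕ → ℝ := fun p => (cf a b (c+1) p.1 * r ^ p.1) * (cf a b c p.2 * s ^ p.2) with hG
  have hFsum : Summable F :=
    hAs.mul_of_nonneg hBr (fun n => (hApos s n hs0).le) (fun n => (hBpos r n hr).le)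
  have hGsum : Summable G :=
    hAr.mul_of_nonneg hBs (fun n => (hApos r n hr).le) (fun n => (hBpos s n hs0).le)
  have hFsw : Summable (fun p : ℕ × ℕ => F (p.2, p.1)) :=
    (Equiv.prodComm ℕ ℕ).summable_iff.2 hFsum
  have hGsw : Summable (fun p : ℕ × ℕ => G (p.2, p.1)) :=
    (Equiv.prodComm ℕ ℕ).summable_iff.2 hGsum
  have hAB : ∀ k : ℕ, cf a b (c+1) k = cf a b c k * (c/(c+k)) := cf_succ_rel hc
  have hle : ∀ p : ℕ × ℕ, F p + F (p.2, p.1) ≤ G p + G (p.2, p.1) := by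
    rintro ⟨m, n⟩
    have hp := pointwise_ineq hc hr hrs m n
    have hBm := cf_pos ha hb hc m
    have hBn := cf_pos ha hb hc n
    have e1 : F (m, n) + F (n, m) = (cf a b c m * cf a b c n) *
        ((c/(c+m)) * (s^m * r^n) + (c/(c+n)) * (s^n * r^m)) := by
      simp only [hF, hAB]; ring
    have e2 : G (m, n) + G (n, m) = (cf a b c m * cf a b c n) *
        ((c/(c+m)) * (r^m * s^n) + (c/(c+n)) * (r^n * s^m)) := by
      simp only [hG, hAB]; ring
    rw [e1, e2]
    exact mul_le_mul_of_nonneg_left hp (by positivity)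
  have hstrict : F (0, 1) + F (1, 0) < G (0, 1) + G (1, 0) := by
    have hBm := cf_pos ha hb hc 0
    have hBn := cf_pos ha hb hc 1
    have e1 : F (0, 1) + F (1, 0) = (cf a b c 0 * cf a b c 1) *
        ((c/(c+(0:ℕ))) * (s^(0:ℕ) * r^(1:ℕ)) + (c/(c+(1:ℕ))) * (s^(1:ℕ) * r^(0:ℕ))) := by
      simp only [hF, hAB]; ring
    have e2 : G (0, 1) + G (1, 0) = (cf a b c 0 * cf a b c 1) *
        ((c/(c+(0:ℕ))) * (r^(0:ℕ) * s^(1:ℕ)) + (c/(c+(1:ℕ))) * (r^(1:ℕ) * s^(0:ℕ))) := by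
      simp only [hG, hAB]; ring
    rw [e1, e2]
    apply mul_lt_mul_of_pos_left _ (by positivity)
    push_cast
    simp only [pow_zero, pow_one, one_mul, mul_one, add_zero]
    have hcc : c / c = 1 := div_self hc.ne'
    have hy : c/(c+1) < 1 := by rw [div_lt_one hc1]; linarith
    rw [hcc]
    nlinarith [mul_pos (sub_pos.2 hy) (sub_pos.2 hrs)]
  have key : ∑' p : ℕ × ℕ, (F p + F (p.2, p.1)) < ∑' p : ℕ × ℕ, (G p + G (p.2, p.1)) :=
    Summable.tsum_lt_tsum hle hstrict (hFsum.add hFsw) (hGsum.add hGsw)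
  have eF : ∑' p : ℕ × ℕ, F (p.2, p.1) = ∑' p, F p := (Equiv.prodComm ℕ ℕ).tsum_eq F
  have eG : ∑' p : ℕ × ℕ, G (p.2, p.1) = ∑' p, G p := (Equiv.prodComm ℕ ℕ).tsum_eq G
  rw [Summable.tsum_add hFsum hFsw, Summable.tsum_add hGsum hGsw, eF, eG] at key
  have hFG : ∑' p, F p < ∑' p, G p := by linarith
  rw [Summable.tsum_mul_tsum hAs hBr hFsum, Summable.tsum_mul_tsum hAr hBs hGsum]
  exact hFG

lemma hyp_eq (a b c x : ℝ) : hyp a b c x = ∑' n, cf a b c n * x ^ n := rfl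

lemma hyp_pos {a b c x : ℝ} (ha : 0 < a) (hb : 0 < b) (hc : 0 < c) (hx0 : 0 < x) (hx1 : x < 1) :
    0 < hyp a b c x := by
  rw [hyp_eq]
  refine Summable.tsum_pos (summable_cf ha hb hc hx0 hx1) (fun n => ?_) 0 ?_
  · have := cf_pos ha hb hc n; positivity
  · have := cf_pos ha hb hc 0; positivity

theorem stmt18 (a b : ℝ) (ha : 0 < a) (hb : 0 < b) :
    StrictAntiOn (fun r : ℝ => hyp a b (a + b + 1) r / hyp a b (a + b) r)
      (Set.Ioo 0 1) ∧
    ∀ r ∈ Set.Ioo (0 : ℝ) 1, hyp a b (a + b + 1) r / hyp a b (a + b) r < 1 := by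
  have hc : 0 < a + b := by positivity
  have hc1 : 0 < a + b + 1 := by positivity
  constructor
  · rintro x ⟨hx0, hx1⟩ y ⟨hy0, hy1⟩ hxy
    simp only
    rw [div_lt_div_iff₀ (hyp_pos ha hb hc hy0 hy1) (hyp_pos ha hb hc hx0 hx1)]
    have := cross ha hb hx0 hxy hy1
    simpa [hyp_eq] using this
  · rintro r ⟨hr0, hr1⟩
    rw [div_lt_one (hyp_pos ha hb hc hr0 hr1), hyp_eq, hyp_eq]
    refine Summable.tsum_lt_tsum (f := fun n => cf a b (a+b+1) n * r ^ n) (i := 1) (fun n => ?_) ?_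
      (summable_cf ha hb hc1 hr0 hr1) (summable_cf ha hb hc hr0 hr1)
    · have hrel := cf_succ_rel (a := a) (b := b) hc n
      have hBn := cf_pos ha hb hc n
      have hfrac : (a+b)/((a+b)+(n:ℝ)) ≤ 1 := by
        rw [div_le_one (by positivity)]
        linarith [Nat.cast_nonneg (α := ℝ) n]
      have hAB : cf a b (a+b+1) n ≤ cf a b (a+b) n := by
        rw [hrel]; nlinarith
      have hrn : (0:ℝ) ≤ r ^ n := by positivity
      exact mul_le_mul_of_nonneg_right hAB hrn
    · have hrel := cf_succ_rel (a := a) (b := b) hc 1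
      have hBn := cf_pos ha hb hc 1
      have hfrac : (a+b)/((a+b)+((1:ℕ):ℝ)) < 1 := by
        rw [div_lt_one (by positivity)]
        push_cast; linarith
      have hAB : cf a b (a+b+1) 1 < cf a b (a+b) 1 := by
        rw [hrel]; nlinarith
      have hrn : (0:ℝ) < r ^ 1 := by positivity
      exact mul_lt_mul_of_pos_right hAB hrn
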